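/- For every α ∈ 𝔻 and every integer m ≥ 1, the set {b_α^j · (M_z* b_α) : 0 ≤ j ≤ m-1} is an orthogonal basis of the m-dimensional quotient module Q_{b_α^m} = H²(𝔻) ⊖ b_α^m H²(𝔻), and each of these vectors has norm (1-|α|²)^{1/2}. -/

import Mathlib

open scoped ComplexConjugate

noncomputable section

namespace Rudin

/-- The open unit disc in `ℂ`. -/
def disc : Set ℂ := Metric.ball 0 1

/-- The Hardy space `H²(𝔻)`, modeled as the space of square-summable
power-series coefficient sequences. -/
abbrev H2 : Type := lp (fun _ : ℕ => ℂ) 2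

/-- Evaluation of an element of `H²(𝔻)` as a holomorphic function on the disc. -/
def H2.eval (f : H2) (z : ℂ) : ℂ := ∑' m : ℕ, (f : ℕ → ℂ) m * z ^ m

/-- `T` is the operator of multiplication by the function `φ` on `H²(𝔻)`. -/
def IsMulOp (φ : ℂ → ℂ) (T : H2 →L[ℂ] H2) : Prop :=
  ∀ f : H2, ∀ z ∈ disc, H2.eval (T f) z = φ z * H2.eval f z

/-- `φ` is an inner function: bounded holomorphic on `𝔻`, multiplication by `φ`
maps `H²(𝔻)` into itself and is an isometry. -/
structure IsInner (φ : ℂ → ℂ) : Prop where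
  diff : DifferentiableOn ℂ φ disc
  bdd : ∃ C : ℝ, ∀ z ∈ disc, ‖φ z‖ ≤ C
  mul_mem : ∀ h : H2, ∃ g : H2, ∀ z ∈ disc, H2.eval g z = φ z * H2.eval h z
  isom : ∀ h g : H2, (∀ z ∈ disc, H2.eval g z = φ z * H2.eval h z) → ‖g‖ = ‖h‖

/-- Divisibility of inner functions: `ψ = φ · θ` with `θ` inner. -/
def InnerDvd (φ ψ : ℂ → ℂ) : Prop :=
  ∃ θ : ℂ → ℂ, IsInner θ ∧ ∀ z ∈ disc, ψ z = φ z * θ z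

/-- The subset `φ H²(𝔻)` of `H²(𝔻)`. -/
def shiftedSet (φ : ℂ → ℂ) : Set H2 :=
  {g | ∃ h : H2, ∀ z ∈ disc, H2.eval g z = φ z * H2.eval h z}

/-- The quotient module `Q_φ = H²(𝔻) ⊖ φ H²(𝔻)`. -/
def Qsp (φ : ℂ → ℂ) : Submodule ℂ H2 := (Submodule.span ℂ (shiftedSet φ))ᗮ

/-- The Blaschke factor at `a ∈ 𝔻`. -/
def blaschke (a z : ℂ) : ℂ := (z - a) / (1 - conj a * z)

/-- The smallest closed subspace of `H²(𝔻)` containing `f` and invariant under `Mz*`. -/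
def starHull (Mz : H2 →L[ℂ] H2) (f : H2) : Submodule ℂ H2 :=
  sInf {K : Submodule ℂ H2 | IsClosed (K : Set H2) ∧ f ∈ K ∧
    ∀ x ∈ K, ContinuousLinearMap.adjoint Mz x ∈ K}

/-- `f` is a star-cyclic vector of the quotient module `Q`. -/
def StarCyclic (Mz : H2 →L[ℂ] H2) (Q : Submodule ℂ H2) (f : H2) : Prop :=
  f ∈ Q ∧ starHull Mz f = Q

end Rudin


/-!
In the coefficient model `H² = ℓ²(ℕ)`, `M_z` is the forward shift `S`: an isometry whose range
is `e₀ᗮ`. For `|α| < 1` put `T = b_α(S) = (S - α)(1 - ᾱS)⁻¹`, which is multiplication by `b_α`,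
so that `Q_{b_α^m} = (range T^m)ᗮ`. A direct computation shows that `T` is again an isometry and
that its range is `k_αᗮ`, where `k_α = (1 - ᾱS)⁻¹ e₀` is the Szegő kernel at `α`.

Now for any isometry `T` whose range is the orthogonal complement of a single vector `u`, the
vectors `T^j u`, `j < m`, are pairwise orthogonal, all of norm `‖u‖`, and span `(range T^m)ᗮ`:
orthogonality because powers of `T` preserve inner products and `u ⊥ range T`; spanning because a
vector orthogonal to `range T^m` and to all the `T^j u` is orthogonal to `u`, hence of the form
`T w`, and `w` satisfies the same conditions with `m - 1`. Finally
`M_z* b_α = S*(T e₀) = (1 - |α|²) k_α` is again such a `u`, of norm `(1 - |α|²)^{1/2}`.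
-/

open scoped InnerProductSpace

variable {𝕜 E : Type*} [RCLike 𝕜] [NormedAddCommGroup E] [InnerProductSpace 𝕜 E]

/-- `u` spans the wandering subspace `(range T)ᗮ` of the isometry `T`. -/
structure IsWanderingVector (T : E →L[𝕜] E) (u : E) : Prop where
  inner_map_map : ∀ x y, ⟪T x, T y⟫_𝕜 = ⟪x, y⟫_𝕜
  range_eq : T.range = (𝕜 ∙ u)ᗮ

namespace IsWanderingVector

variable {T : E →L[𝕜] E} {u : E}

theorem smul (hT : IsWanderingVector T u) {c : 𝕜} (hc : c ≠ 0) :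
    IsWanderingVector T (c • u) :=
  ⟨hT.inner_map_map, by rw [Submodule.span_singleton_smul_eq hc.isUnit, hT.range_eq]⟩

theorem norm_apply (hT : IsWanderingVector T u) (x : E) : ‖T x‖ = ‖x‖ :=
  (T.toLinearMap.isometryOfInner hT.inner_map_map).norm_map x

theorem inner_pow_map_pow (hT : IsWanderingVector T u) (n : ℕ) (x y : E) :
    ⟪(T ^ n) x, (T ^ n) y⟫_𝕜 = ⟪x, y⟫_𝕜 := by
  induction n with
  | zero => rfl
  | succ n ih => rw [pow_succ', mul_apply_eq_comp, mul_apply_eq_comp, hT.inner_map_map, ih]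

theorem norm_pow_apply (hT : IsWanderingVector T u) (n : ℕ) (x : E) : ‖(T ^ n) x‖ = ‖x‖ :=
  ((T ^ n).toLinearMap.isometryOfInner (hT.inner_pow_map_pow n)).norm_map x

theorem inner_apply_eq_zero (hT : IsWanderingVector T u) (x : E) : ⟪u, T x⟫_𝕜 = 0 := by
  rw [← Submodule.mem_orthogonal_singleton_iff_inner_right, ← hT.range_eq]
  exact ⟨x, rfl⟩

theorem inner_pow_apply_pow_eq_zero (hT : IsWanderingVector T u) {i j : ℕ} (hij : i < j)
    (x : E) : ⟪(T ^ i) u, (T ^ j) x⟫_𝕜 = 0 := by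
  obtain ⟨d, rfl⟩ := Nat.exists_eq_add_of_lt hij
  rw [add_assoc, pow_add, mul_apply_eq_comp, hT.inner_pow_map_pow, pow_succ',
    mul_apply_eq_comp, hT.inner_apply_eq_zero]

theorem inner_pow_apply_pow_apply_of_ne (hT : IsWanderingVector T u) {i j : ℕ} (hij : i ≠ j) :
    ⟪(T ^ i) u, (T ^ j) u⟫_𝕜 = 0 := by
  rcases lt_or_gt_of_ne hij with h | h
  · exact hT.inner_pow_apply_pow_eq_zero h u
  · rw [inner_eq_zero_symm]
    exact hT.inner_pow_apply_pow_eq_zero h u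

theorem pow_apply_mem_orthogonal_range_pow (hT : IsWanderingVector T u) {i m : ℕ} (hi : i < m) :
    (T ^ i) u ∈ ((T ^ m).range)ᗮ := by
  rintro _ ⟨x, rfl⟩
  rw [inner_eq_zero_symm]
  exact hT.inner_pow_apply_pow_eq_zero hi x

theorem eq_zero_of_inner_pow_apply_eq_zero (hT : IsWanderingVector T u) {m : ℕ} {f : E}
    (hrange : ∀ x, ⟪(T ^ m) x, f⟫_𝕜 = 0) (hu : ∀ i < m, ⟪(T ^ i) u, f⟫_𝕜 = 0) : f = 0 := by
  induction m generalizing f with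
  | zero => exact inner_self_eq_zero.mp (hrange f)
  | succ m ih =>
    have hf : f ∈ T.range := by
      rw [hT.range_eq, Submodule.mem_orthogonal_singleton_iff_inner_right]
      simpa using hu 0 m.succ_pos
    obtain ⟨w, rfl⟩ := hf
    have hw : w = 0 := by
      refine ih (fun x => ?_) (fun i hi => ?_)
      · rw [← hT.inner_map_map, ← mul_apply_eq_comp, ← pow_succ']
        exact hrange x
      · rw [← hT.inner_map_map, ← mul_apply_eq_comp, ← pow_succ']
        exact hu (i + 1) (by omega)
    rw [hw, map_zero]

theorem span_pow_apply_eq_orthogonal_range_pow (hT : IsWanderingVector T u) (m : ℕ) :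
    Submodule.span 𝕜 (Set.range fun i : Fin m => (T ^ (i : ℕ)) u) = ((T ^ m).range)ᗮ := by
  set P := Submodule.span 𝕜 (Set.range fun i : Fin m => (T ^ (i : ℕ)) u)
  have : FiniteDimensional 𝕜 P := FiniteDimensional.span_of_finite 𝕜 (Set.finite_range _)
  have hPQ : P ≤ ((T ^ m).range)ᗮ := by
    rw [Submodule.span_le]
    rintro _ ⟨i, rfl⟩
    exact hT.pow_apply_mem_orthogonal_range_pow i.2
  have hbot : Pᗮ ⊓ ((T ^ m).range)ᗮ = ⊥ := by
    refine (Submodule.eq_bot_iff _).mpr fun f ⟨hfP, hfQ⟩ => ?_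
    refine hT.eq_zero_of_inner_pow_apply_eq_zero (fun x => hfQ _ ⟨x, rfl⟩) fun i hi => ?_
    exact hfP _ (Submodule.subset_span ⟨⟨i, hi⟩, rfl⟩)
  rw [← Submodule.sup_orthogonal_inf_of_hasOrthogonalProjection hPQ, hbot, sup_bot_eq]

theorem linearIndependent_pow_apply (hT : IsWanderingVector T u) (hu : u ≠ 0) (m : ℕ) :
    LinearIndependent 𝕜 fun i : Fin m => (T ^ (i : ℕ)) u := by
  refine linearIndependent_of_ne_zero_of_inner_eq_zero (fun i => ?_) fun i j hij => ?_
  · rwa [← norm_ne_zero_iff, hT.norm_pow_apply, norm_ne_zero_iff]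
  · exact hT.inner_pow_apply_pow_apply_of_ne (Fin.val_injective.ne hij)

theorem finrank_orthogonal_range_pow (hT : IsWanderingVector T u) (hu : u ≠ 0) (m : ℕ) :
    Module.finrank 𝕜 ((T ^ m).range)ᗮ = m := by
  rw [← hT.span_pow_apply_eq_orthogonal_range_pow, finrank_span_eq_card
    (hT.linearIndependent_pow_apply hu m), Fintype.card_fin]

theorem opNorm_le_one (hT : IsWanderingVector T u) : ‖T‖ ≤ 1 :=
  T.opNorm_le_bound zero_le_one fun x => by rw [one_mul, hT.norm_apply]

variable [CompleteSpace E]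

theorem adjoint_apply_apply (hT : IsWanderingVector T u) (x : E) : T.adjoint (T x) = x :=
  ext_inner_left 𝕜 fun y => by
    rw [ContinuousLinearMap.adjoint_inner_right]
    exact hT.inner_map_map y x

theorem adjoint_apply_eq_zero (hT : IsWanderingVector T u) : T.adjoint u = 0 :=
  ext_inner_left 𝕜 fun y => by
    rw [ContinuousLinearMap.adjoint_inner_right, inner_zero_right, inner_eq_zero_symm]
    exact hT.inner_apply_eq_zero y

end IsWanderingVector

theorem one_sub_mul_conj_eq_ofReal (α : 𝕜) : 1 - α * conj α = ((1 - ‖α‖ ^ 2 : ℝ) : 𝕜) := by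
  rw [RCLike.mul_conj]
  push_cast
  ring

theorem isUnit_one_sub_smul_of_norm_le_one [CompleteSpace E] {A : E →L[𝕜] E} (hA : ‖A‖ ≤ 1)
    {c : 𝕜} (hc : ‖c‖ < 1) : IsUnit (1 - c • A) := by
  refine isUnit_one_sub_of_norm_lt_one ((norm_smul_le c A).trans_lt ?_)
  nlinarith [norm_nonneg c]

/-- `b_α(S) = (S - α)(1 - ᾱS)⁻¹`; `Ring.inverse` is a junk value unless `1 - ᾱS` is invertible,
which holds for `‖α‖ < 1` and `‖S‖ ≤ 1`. -/
def blaschkeOp (S : E →L[𝕜] E) (α : 𝕜) : E →L[𝕜] E :=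
  (S - α • 1) * Ring.inverse (1 - conj α • S)

/-- For the shift of `H²` and `e = e₀` this is the Szegő kernel at `α`, with coefficients `ᾱⁿ`. -/
def blaschkeKernel (S : E →L[𝕜] E) (α : 𝕜) (e : E) : E :=
  Ring.inverse (1 - conj α • S) e

theorem blaschkeOp_apply (S : E →L[𝕜] E) (α : 𝕜) (x : E) :
    blaschkeOp S α x =
      S (Ring.inverse (1 - conj α • S) x) - α • Ring.inverse (1 - conj α • S) x := by
  simp [blaschkeOp]

namespace IsWanderingVector

variable [CompleteSpace E] {S : E →L[𝕜] E} {e : E} (hS : IsWanderingVector S e) {α : 𝕜}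
  (hα : ‖α‖ < 1)
include hS hα

theorem isUnit_one_sub_smul : IsUnit (1 - conj α • S) :=
  isUnit_one_sub_smul_of_norm_le_one hS.opNorm_le_one (by rwa [RCLike.norm_conj])

theorem one_sub_smul_apply_inverse_apply (x : E) :
    Ring.inverse (1 - conj α • S) x - conj α • S (Ring.inverse (1 - conj α • S) x) = x := by
  simpa using congrArg (· x) (Ring.mul_inverse_cancel _ (hS.isUnit_one_sub_smul hα))

theorem inverse_apply_one_sub_smul_apply (x : E) :
    Ring.inverse (1 - conj α • S) (x - conj α • S x) = x := by
  simpa using congrArg (· x) (Ring.inverse_mul_cancel _ (hS.isUnit_one_sub_smul hα))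

theorem sub_smul_apply_blaschkeKernel :
    blaschkeKernel S α e - conj α • S (blaschkeKernel S α e) = e :=
  hS.one_sub_smul_apply_inverse_apply hα e

theorem inner_blaschkeKernel_apply (x : E) :
    ⟪blaschkeKernel S α e, S x⟫_𝕜 = α * ⟪blaschkeKernel S α e, x⟫_𝕜 := by
  conv_lhs => rw [← sub_add_cancel (blaschkeKernel S α e) (conj α • S (blaschkeKernel S α e)),
    hS.sub_smul_apply_blaschkeKernel hα]
  rw [inner_add_left, inner_smul_left, hS.inner_map_map, RCLike.conj_conj,
    hS.inner_apply_eq_zero, zero_add]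

theorem inner_blaschkeOp_blaschkeOp (x y : E) :
    ⟪blaschkeOp S α x, blaschkeOp S α y⟫_𝕜 = ⟪x, y⟫_𝕜 := by
  conv_rhs => rw [← hS.one_sub_smul_apply_inverse_apply hα x,
    ← hS.one_sub_smul_apply_inverse_apply hα y]
  simp only [blaschkeOp_apply, inner_sub_left, inner_sub_right, inner_smul_left,
    inner_smul_right, hS.inner_map_map, RCLike.conj_conj]
  ring

theorem range_blaschkeOp : (blaschkeOp S α).range = (𝕜 ∙ blaschkeKernel S α e)ᗮ := by
  ext f
  rw [Submodule.mem_orthogonal_singleton_iff_inner_right]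
  constructor
  · rintro ⟨x, rfl⟩
    rw [ContinuousLinearMap.coe_coe, blaschkeOp_apply, inner_sub_right, inner_smul_right,
      hS.inner_blaschkeKernel_apply hα, sub_self]
  · intro hf
    -- Solve `q - α S* q = f`; then `⟪e, q⟫ = ⟪k, f⟫ = 0`, so `q = S w` and `f = (S - α) w`.
    obtain ⟨B, hB⟩ := (isUnit_one_sub_smul_of_norm_le_one
      ((LinearIsometryEquiv.norm_map ContinuousLinearMap.adjoint S).trans_le hS.opNorm_le_one)
      hα).exists_right_inv
    set q := B f
    have hq : q - α • S.adjoint q = f := by simpa using congrArg (· f) hB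
    have hqe : q ∈ (𝕜 ∙ e)ᗮ := by
      rw [Submodule.mem_orthogonal_singleton_iff_inner_right,
        ← hS.sub_smul_apply_blaschkeKernel hα, inner_sub_left, inner_smul_left,
        ← ContinuousLinearMap.adjoint_inner_right, RCLike.conj_conj, ← inner_smul_right,
        ← inner_sub_right, hq, hf]
    rw [← hS.range_eq] at hqe
    obtain ⟨w, hw⟩ := hqe
    refine ⟨w - conj α • S w, ?_⟩
    rw [ContinuousLinearMap.coe_coe, blaschkeOp_apply, hS.inverse_apply_one_sub_smul_apply hα,
      ← hq, ← hw]
    simp only [ContinuousLinearMap.coe_coe, hS.adjoint_apply_apply]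

theorem blaschkeOp_blaschkeKernel :
    IsWanderingVector (blaschkeOp S α) (blaschkeKernel S α e) :=
  ⟨hS.inner_blaschkeOp_blaschkeOp hα, hS.range_blaschkeOp hα⟩

theorem adjoint_apply_blaschkeKernel :
    S.adjoint (blaschkeKernel S α e) = conj α • blaschkeKernel S α e := by
  conv_lhs => rw [← sub_add_cancel (blaschkeKernel S α e) (conj α • S (blaschkeKernel S α e)),
    hS.sub_smul_apply_blaschkeKernel hα]
  rw [map_add, map_smul, hS.adjoint_apply_eq_zero, hS.adjoint_apply_apply, zero_add]

theorem adjoint_apply_blaschkeOp_apply :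
    S.adjoint (blaschkeOp S α e) = (1 - α * conj α) • blaschkeKernel S α e := by
  rw [blaschkeOp_apply, ← blaschkeKernel, map_sub, map_smul, hS.adjoint_apply_apply,
    hS.adjoint_apply_blaschkeKernel hα, smul_smul, sub_smul, one_smul]

theorem inner_self_eq_mul_inner_blaschkeKernel :
    ⟪e, e⟫_𝕜 = (1 - α * conj α) * ⟪blaschkeKernel S α e, blaschkeKernel S α e⟫_𝕜 := by
  have h := hS.inner_blaschkeKernel_apply hα (blaschkeKernel S α e)
  conv_lhs => rw [← hS.sub_smul_apply_blaschkeKernel hα]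
  rw [inner_sub_left, inner_sub_right, inner_sub_right, inner_smul_left, inner_smul_right,
    inner_smul_left, inner_smul_right, hS.inner_map_map, RCLike.conj_conj, h,
    ← inner_conj_symm (S _), h]
  simp only [map_mul, inner_conj_symm]
  ring

theorem norm_adjoint_apply_blaschkeOp_apply (he : ‖e‖ = 1) :
    ‖S.adjoint (blaschkeOp S α e)‖ = √(1 - ‖α‖ ^ 2) := by
  have h := hS.inner_self_eq_mul_inner_blaschkeKernel hα
  rw [inner_self_eq_norm_sq_to_K, he, RCLike.ofReal_one, one_pow] at h
  rw [norm_eq_sqrt_re_inner (𝕜 := 𝕜), hS.adjoint_apply_blaschkeOp_apply hα, inner_smul_left,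
    inner_smul_right, ← h, mul_one, one_sub_mul_conj_eq_ofReal, RCLike.conj_ofReal]
  simp

theorem blaschkeOp_adjoint_apply_blaschkeOp_apply :
    IsWanderingVector (blaschkeOp S α) (S.adjoint (blaschkeOp S α e)) := by
  have hc : (1 - α * conj α) ≠ 0 := by
    rw [one_sub_mul_conj_eq_ofReal, RCLike.ofReal_ne_zero]
    nlinarith [norm_nonneg α]
  rw [hS.adjoint_apply_blaschkeOp_apply hα]
  exact (hS.blaschkeOp_blaschkeKernel hα).smul hc

end IsWanderingVector

namespace Rudin

theorem mem_disc_iff {z : ℂ} : z ∈ disc ↔ ‖z‖ < 1 := by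
  simp [disc]

theorem summable_sq_norm (f : H2) : Summable fun n => ‖(f : ℕ → ℂ) n‖ ^ (2 : ℝ) := by
  simpa using (lp.memℓp f).summable (by norm_num)

def shiftSeq (f : ℕ → ℂ) : ℕ → ℂ
  | 0 => 0
  | n + 1 => f n

theorem shiftSeq_add (f g : ℕ → ℂ) : shiftSeq (f + g) = shiftSeq f + shiftSeq g :=
  funext fun n => by cases n <;> simp [shiftSeq]

theorem shiftSeq_smul (c : ℂ) (f : ℕ → ℂ) : shiftSeq (c • f) = c • shiftSeq f :=
  funext fun n => by cases n <;> simp [shiftSeq]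

theorem memℓp_shiftSeq (f : H2) : Memℓp (shiftSeq f) 2 :=
  memℓp_gen <| (summable_nat_add_iff 1).mp <| by simpa [shiftSeq] using summable_sq_norm f

theorem memℓp_tail (f : H2) : Memℓp (fun n => (f : ℕ → ℂ) (n + 1)) 2 :=
  memℓp_gen <| by simpa using (summable_nat_add_iff 1).mpr (summable_sq_norm f)

def shiftₗ : H2 →ₗ[ℂ] H2 where
  toFun f := ⟨shiftSeq f, memℓp_shiftSeq f⟩
  map_add' f g := lp.ext <| by simp only [lp.coeFn_add]; exact shiftSeq_add _ _
  map_smul' c f := lp.ext <| by simp only [lp.coeFn_smul]; exact shiftSeq_smul _ _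

theorem inner_shiftₗ_shiftₗ (f g : H2) : ⟪shiftₗ f, shiftₗ g⟫_ℂ = ⟪f, g⟫_ℂ := by
  rw [lp.inner_eq_tsum, lp.inner_eq_tsum, (lp.summable_inner (𝕜 := ℂ) _ _).tsum_eq_zero_add]
  change ⟪(0 : ℂ), 0⟫_ℂ + _ = _
  rw [inner_zero_left, zero_add]
  rfl

def shift : H2 →L[ℂ] H2 := (shiftₗ.isometryOfInner inner_shiftₗ_shiftₗ).toContinuousLinearMap

theorem coe_shift (f : H2) : ⇑(shift f) = shiftSeq f := rfl

theorem isWanderingVector_shift : IsWanderingVector shift (lp.single 2 0 1) := by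
  refine ⟨inner_shiftₗ_shiftₗ, ?_⟩
  ext f
  rw [Submodule.mem_orthogonal_singleton_iff_inner_right, lp.inner_single_left]
  simp only [LinearMap.mem_range, RCLike.inner_apply, map_one, mul_one]
  constructor
  · rintro ⟨w, rfl⟩
    rfl
  · intro hf
    refine ⟨⟨_, memℓp_tail f⟩, lp.ext <| funext fun n => ?_⟩
    cases n with
    | zero => exact hf.symm
    | succ n => rfl

theorem summable_coeff_mul_pow (f : H2) {z : ℂ} (hz : ‖z‖ < 1) :
    Summable fun n => (f : ℕ → ℂ) n * z ^ n := by
  refine Summable.of_norm_bounded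
    ((summable_geometric_of_lt_one (norm_nonneg z) hz).mul_left ‖f‖) fun n => ?_
  rw [norm_mul, norm_pow]
  exact mul_le_mul_of_nonneg_right (lp.norm_apply_le_norm two_ne_zero f n) (by positivity)

theorem H2.hasSum_eval (f : H2) {z : ℂ} (hz : z ∈ disc) :
    HasSum (fun n => (f : ℕ → ℂ) n * z ^ n) (H2.eval f z) :=
  (summable_coeff_mul_pow f (mem_disc_iff.mp hz)).hasSum

theorem H2.eval_sub (f g : H2) {z : ℂ} (hz : z ∈ disc) :
    H2.eval (f - g) z = H2.eval f z - H2.eval g z :=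
  (H2.hasSum_eval (f - g) hz).unique <| by
    simpa [sub_mul] using (H2.hasSum_eval f hz).sub (H2.hasSum_eval g hz)

theorem H2.eval_smul (c : ℂ) (f : H2) (z : ℂ) : H2.eval (c • f) z = c * H2.eval f z := by
  simp [H2.eval, ← tsum_mul_left, mul_assoc]

theorem H2.eval_shift (f : H2) {z : ℂ} (hz : z ∈ disc) :
    H2.eval (shift f) z = z * H2.eval f z := by
  have h : HasSum (fun n => shiftSeq f (n + 1) * z ^ (n + 1)) (z * H2.eval f z) :=
    ((H2.hasSum_eval f hz).mul_left z).congr_fun fun n => by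
      rw [shiftSeq, pow_succ]
      ring
  have h0 := HasSum.zero_add (f := fun n => shiftSeq f n * z ^ n) h
  rw [shiftSeq, zero_mul, zero_add, ← coe_shift] at h0
  exact (H2.hasSum_eval (shift f) hz).unique h0

theorem H2.eval_single_zero {z : ℂ} : H2.eval (lp.single 2 0 1) z = 1 := by
  rw [H2.eval, tsum_eq_single 0 fun n hn => by simp [lp.single_apply, hn]]
  simp

theorem H2.eq_zero_of_eval_eq_zero {f : H2} (hf : ∀ z ∈ disc, H2.eval f z = 0) : f = 0 := by
  set p := FormalMultilinearSeries.ofScalars ℂ (f : ℕ → ℂ)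
  have hp : HasFPowerSeriesOnBall (H2.eval f) p 0 1 :=
    { r_le := by
        simpa using p.le_radius_of_bound (r := 1) ‖f‖ fun n => by
          simpa [p, FormalMultilinearSeries.ofScalars_norm] using
            lp.norm_apply_le_norm two_ne_zero f n
      r_pos := one_pos
      hasSum := fun {y} hy => by
        simpa [p, FormalMultilinearSeries.ofScalars_apply_eq, mul_comm] using
          H2.hasSum_eval f (mem_disc_iff.mpr (by simpa [← ofReal_norm] using hy)) }
  have hp0 := hp.hasFPowerSeriesAt.eq_zero_of_eventually
    (Filter.eventually_of_mem (Metric.ball_mem_nhds 0 one_pos) hf)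
  exact lp.ext ((FormalMultilinearSeries.ofScalars_series_eq_zero ℂ).mp hp0)

theorem H2.ext_eval {f g : H2} (h : ∀ z ∈ disc, H2.eval f z = H2.eval g z) : f = g :=
  sub_eq_zero.mp <| H2.eq_zero_of_eval_eq_zero fun z hz => by
    rw [H2.eval_sub f g hz, h z hz, sub_self]

theorem eq_shift_of_isMulOp {Mz : H2 →L[ℂ] H2} (hMz : IsMulOp (fun z => z) Mz) : Mz = shift :=
  ContinuousLinearMap.ext fun f => H2.ext_eval fun z hz => by
    rw [hMz f z hz, H2.eval_shift f hz]

theorem one_sub_conj_mul_ne_zero {α z : ℂ} (hα : ‖α‖ < 1) (hz : z ∈ disc) :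
    1 - conj α * z ≠ 0 := by
  refine sub_ne_zero.mpr fun h => ?_
  have h1 : ‖conj α * z‖ < 1 := by
    rw [norm_mul, RCLike.norm_conj]
    exact mul_lt_one_of_nonneg_of_lt_one_left (norm_nonneg α) hα (mem_disc_iff.mp hz).le
  rw [← h, norm_one] at h1
  exact lt_irrefl 1 h1

theorem H2.eval_blaschkeOp {α : ℂ} (hα : ‖α‖ < 1) (f : H2) {z : ℂ} (hz : z ∈ disc) :
    H2.eval (blaschkeOp shift α f) z = blaschke α z * H2.eval f z := by
  have hf : H2.eval f z = (1 - conj α * z) * H2.eval (Ring.inverse (1 - conj α • shift) f) z := by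
    conv_lhs => rw [← isWanderingVector_shift.one_sub_smul_apply_inverse_apply hα f]
    rw [H2.eval_sub _ _ hz, H2.eval_smul, H2.eval_shift _ hz]
    ring
  rw [blaschkeOp_apply, H2.eval_sub _ _ hz, H2.eval_smul, H2.eval_shift _ hz, hf, blaschke,
    div_mul_eq_mul_div, mul_left_comm (z - α),
    mul_div_cancel_left₀ _ (one_sub_conj_mul_ne_zero hα hz)]
  ring

theorem H2.eval_blaschkeOp_pow {α : ℂ} (hα : ‖α‖ < 1) (n : ℕ) (f : H2) {z : ℂ} (hz : z ∈ disc) :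
    H2.eval ((blaschkeOp shift α ^ n) f) z = blaschke α z ^ n * H2.eval f z := by
  induction n with
  | zero => simp
  | succ n ih =>
    rw [pow_succ', mul_apply_eq_comp, H2.eval_blaschkeOp hα _ hz, ih, pow_succ']
    ring

theorem Qsp_blaschke_pow {α : ℂ} (hα : ‖α‖ < 1) (m : ℕ) :
    Qsp (fun z => blaschke α z ^ m) = ((blaschkeOp shift α ^ m).range)ᗮ := by
  have hset : shiftedSet (fun z => blaschke α z ^ m) = (blaschkeOp shift α ^ m).range := by
    ext g
    refine ⟨fun ⟨h, hh⟩ => ⟨h, H2.ext_eval fun z hz => ?_⟩, fun ⟨h, hh⟩ => ⟨h, fun z hz => ?_⟩⟩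
    · rw [hh z hz]
      exact H2.eval_blaschkeOp_pow hα m h hz
    · rw [← hh]
      exact H2.eval_blaschkeOp_pow hα m h hz
  rw [Qsp, hset, Submodule.span_eq]

end Rudin

open Rudin in
theorem stmt8_general (α : ℂ) (hα : α ∈ disc) (m : ℕ)
    (Mz : H2 →L[ℂ] H2) (hMz : IsMulOp (fun z => z) Mz)
    (bα : H2) (hb : ∀ z ∈ disc, H2.eval bα z = blaschke α z)
    (g : ℕ → H2)
    (hg : ∀ j, ∀ z ∈ disc,
      H2.eval (g j) z = blaschke α z ^ j * H2.eval (ContinuousLinearMap.adjoint Mz bα) z) :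
    (∀ j < m, g j ∈ Qsp (fun z => blaschke α z ^ m)) ∧
    (∀ j < m, ∀ j' < m, j ≠ j' → (inner ℂ (g j) (g j') : ℂ) = 0) ∧
    (∀ j < m, ‖g j‖ = Real.sqrt (1 - ‖α‖ ^ 2)) ∧
    Submodule.span ℂ (Set.range fun j : Fin m => g j) = Qsp (fun z => blaschke α z ^ m) ∧
    Module.finrank ℂ (Qsp (fun z => blaschke α z ^ m)) = m := by
  have hα1 : ‖α‖ < 1 := mem_disc_iff.mp hα
  set T := blaschkeOp shift α
  obtain rfl := eq_shift_of_isMulOp hMz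
  obtain rfl : bα = T (lp.single 2 0 1) := H2.ext_eval fun z hz => by
    rw [hb z hz, H2.eval_blaschkeOp hα1 _ hz, H2.eval_single_zero, mul_one]
  obtain rfl : g = fun j => (T ^ j) (shift.adjoint (T (lp.single 2 0 1))) :=
    funext fun j => H2.ext_eval fun z hz => by rw [hg j z hz, H2.eval_blaschkeOp_pow hα1 _ _ hz]
  have hT := isWanderingVector_shift.blaschkeOp_adjoint_apply_blaschkeOp_apply hα1
  have hnorm := isWanderingVector_shift.norm_adjoint_apply_blaschkeOp_apply hα1
    (by simp [lp.norm_single])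
  have hu : shift.adjoint (T (lp.single 2 0 1)) ≠ 0 := by
    rw [← norm_pos_iff, hnorm, Real.sqrt_pos]
    nlinarith [norm_nonneg α]
  rw [Qsp_blaschke_pow hα1]
  exact ⟨fun j hj => hT.pow_apply_mem_orthogonal_range_pow hj,
    fun j _ j' _ hjj' => hT.inner_pow_apply_pow_apply_of_ne hjj',
    fun j _ => (hT.norm_pow_apply j _).trans hnorm,
    hT.span_pow_apply_eq_orthogonal_range_pow m,
    hT.finrank_orthogonal_range_pow hu m⟩

open Rudin in
/-- For `α ∈ 𝔻` and `m ≥ 1`, the vectors `g j = b_α^j · (M_z* b_α)`,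
`0 ≤ j ≤ m-1`, form an orthogonal basis of the `m`-dimensional quotient module
`Q_{b_α^m} = H²(𝔻) ⊖ b_α^m H²(𝔻)`, each of norm `(1-|α|²)^{1/2}`. -/
theorem stmt8 (α : ℂ) (hα : α ∈ disc) (m : ℕ) (hm : 1 ≤ m)
    (Mz : H2 →L[ℂ] H2) (hMz : IsMulOp (fun z => z) Mz)
    (bα : H2) (hb : ∀ z ∈ disc, H2.eval bα z = blaschke α z)
    (g : ℕ → H2)
    (hg : ∀ j, ∀ z ∈ disc,
      H2.eval (g j) z = blaschke α z ^ j * H2.eval (ContinuousLinearMap.adjoint Mz bα) z) :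
    (∀ j < m, g j ∈ Qsp (fun z => blaschke α z ^ m)) ∧
    (∀ j < m, ∀ j' < m, j ≠ j' → (inner ℂ (g j) (g j') : ℂ) = 0) ∧
    (∀ j < m, ‖g j‖ = Real.sqrt (1 - ‖α‖ ^ 2)) ∧
    Submodule.span ℂ (Set.range fun j : Fin m => g j) = Qsp (fun z => blaschke α z ^ m) ∧
    Module.finrank ℂ (Qsp (fun z => blaschke α z ^ m)) = m :=
  stmt8_general α hα m Mz hMz bα hb g hg
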